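/- arXiv:2306.12573 — 2 statements merged into one kernel-verified Lean document; each statement's English description precedes it below -/
import Mathlib

section
/- Let Ω ⊆ ℝ² be open, let F, U : ℝ² → ℝ be continuously differentiable on Ω with U nonvanishing on Ω, and let g : ℝ² → ℝ be twice continuously differentiable on Ω. Then for every p ∈ Ω, (D_h(D_x g))(p) − (D_x(D_h g))(p) = (U p)⁻² · (∂₁U(p) + ∂₂(F·U)(p)) · ∂₂g(p). -/
noncomputable section

/-- Partial derivative with respect to the first variable. -/
def pd1 (f : ℝ × ℝ → ℝ) (p : ℝ × ℝ) : ℝ := deriv (fun t => f (t, p.2)) p.1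

/-- Partial derivative with respect to the second variable. -/
def pd2 (f : ℝ × ℝ → ℝ) (p : ℝ × ℝ) : ℝ := deriv (fun t => f (p.1, t)) p.2

/-- The operator `D_x g = ∂₁ g + F · ∂₂ g`. -/
def Dx (F : ℝ × ℝ → ℝ) (g : ℝ × ℝ → ℝ) (p : ℝ × ℝ) : ℝ := pd1 g p + F p * pd2 g p

/-- The operator `D_h g = U⁻¹ · ∂₂ g`. -/
def Dh (U : ℝ × ℝ → ℝ) (g : ℝ × ℝ → ℝ) (p : ℝ × ℝ) : ℝ := (U p)⁻¹ * pd2 g p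


/-!
Expand both compositions with the product rule, writing every partial derivative as a value of a
Fréchet derivative. The second-order terms in `g` cancel: the `∂₂²g` terms occur with the same
coefficient `F / U` on both sides, and the mixed terms cancel by the symmetry of the second
derivative of a `C²` function. What is left is first order in `g`.
-/

open Topology

theorem HasFDerivAt.pd1_eq {f : ℝ × ℝ → ℝ} {f' : ℝ × ℝ →L[ℝ] ℝ} {p : ℝ × ℝ}
    (hf : HasFDerivAt f f' p) : pd1 f p = f' (1, 0) :=
  (hf.comp_hasDerivAt p.1 ((hasDerivAt_id p.1).prodMk (hasDerivAt_const p.1 p.2))).deriv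

theorem HasFDerivAt.pd2_eq {f : ℝ × ℝ → ℝ} {f' : ℝ × ℝ →L[ℝ] ℝ} {p : ℝ × ℝ}
    (hf : HasFDerivAt f f' p) : pd2 f p = f' (0, 1) :=
  (hf.comp_hasDerivAt p.2 ((hasDerivAt_const p.2 p.1).prodMk (hasDerivAt_id p.2))).deriv

section SecondDerivative

variable {𝕜 E G : Type*} [NontriviallyNormedField 𝕜] [NormedAddCommGroup E] [NormedSpace 𝕜 E]
  [NormedAddCommGroup G] [NormedSpace 𝕜 G] {f : E → G} {x : E}

theorem ContDiffAt.eventually_differentiableAt {n : ℕ} (hf : ContDiffAt 𝕜 n f x) (hn : n ≠ 0) :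
    ∀ᶠ y in 𝓝 x, DifferentiableAt 𝕜 f y :=
  (hf.eventually (by simp)).mono fun _ hy => hy.differentiableAt (by exact_mod_cast hn)

theorem hasFDerivAt_fderiv_apply (hf : ContDiffAt 𝕜 2 f x) (v : E) :
    HasFDerivAt (fun y => fderiv 𝕜 f y v)
      ((ContinuousLinearMap.apply 𝕜 G v).comp (fderiv 𝕜 (fderiv 𝕜 f) x)) x :=
  (ContinuousLinearMap.apply 𝕜 G v).hasFDerivAt.comp x
    ((hf.fderiv_right (m := 1) le_rfl).differentiableAt one_ne_zero).hasFDerivAt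

end SecondDerivative

section PartialDerivatives

variable {g : ℝ × ℝ → ℝ} {p : ℝ × ℝ}

theorem hasFDerivAt_pd1 (hg : ContDiffAt ℝ 2 g p) :
    HasFDerivAt (pd1 g)
      ((ContinuousLinearMap.apply ℝ ℝ (1, 0)).comp (fderiv ℝ (fderiv ℝ g) p)) p :=
  (hasFDerivAt_fderiv_apply hg (1, 0)).congr_of_eventuallyEq <|
    (hg.eventually_differentiableAt two_ne_zero).mono fun _ hq => hq.hasFDerivAt.pd1_eq

theorem hasFDerivAt_pd2 (hg : ContDiffAt ℝ 2 g p) :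
    HasFDerivAt (pd2 g)
      ((ContinuousLinearMap.apply ℝ ℝ (0, 1)).comp (fderiv ℝ (fderiv ℝ g) p)) p :=
  (hasFDerivAt_fderiv_apply hg (0, 1)).congr_of_eventuallyEq <|
    (hg.eventually_differentiableAt two_ne_zero).mono fun _ hq => hq.hasFDerivAt.pd2_eq

end PartialDerivatives

/-- the commutator `D_h D_x − D_x D_h` applied to `g` equals
`U⁻² (∂₁U + ∂₂(F·U)) ∂₂g` on `Ω`. -/
theorem commutator_DhDx (Ω : Set (ℝ × ℝ)) (hΩ : IsOpen Ω)
    (F U g : ℝ × ℝ → ℝ)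
    (hF : ContDiffOn ℝ 1 F Ω) (hU : ContDiffOn ℝ 1 U Ω)
    (hU0 : ∀ p ∈ Ω, U p ≠ 0)
    (hg : ContDiffOn ℝ 2 g Ω) :
    ∀ p ∈ Ω,
      Dh U (Dx F g) p - Dx F (Dh U g) p
        = ((U p) ^ 2)⁻¹ * (pd1 U p + pd2 (fun q => F q * U q) p) * pd2 g p := by
  intro p hp
  have hg2 : ContDiffAt ℝ 2 g p := hg.contDiffAt (hΩ.mem_nhds hp)
  have hF' : HasFDerivAt F (fderiv ℝ F p) p :=
    ((hF.contDiffAt (hΩ.mem_nhds hp)).differentiableAt one_ne_zero).hasFDerivAt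
  have hU' : HasFDerivAt U (fderiv ℝ U p) p :=
    ((hU.contDiffAt (hΩ.mem_nhds hp)).differentiableAt one_ne_zero).hasFDerivAt
  have hDx : HasFDerivAt (Dx F g) _ p :=
    (hasFDerivAt_pd1 hg2).add (hF'.mul (hasFDerivAt_pd2 hg2))
  have hDh : HasFDerivAt (Dh U g) _ p :=
    ((hasFDerivAt_inv (hU0 p hp)).comp p hU').mul (hasFDerivAt_pd2 hg2)
  have hsymm := hg2.isSymmSndFDerivAt (by simp) (0, 1) (1, 0)
  rw [Dh, hDx.pd2_eq, Dx, hDh.pd1_eq, hDh.pd2_eq, (hF'.fun_mul hU').pd2_eq, hU'.pd1_eq,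
    (hg2.differentiableAt two_ne_zero).hasFDerivAt.pd2_eq]
  simp only [add_apply, smul_apply, ContinuousLinearMap.comp_apply,
    ContinuousLinearMap.apply_apply, ContinuousLinearMap.toSpanSingleton_apply,
    Function.comp_apply, smul_eq_mul, hsymm]
  field_simp
  ring
end
end

section
/- Let Ω ⊆ ℝ² be open, let F, U : ℝ² → ℝ be continuously differentiable on Ω with U nonvanishing on Ω, and suppose U is an integrating factor for F, i.e. ∂₁U + ∂₂(F·U) = 0 on Ω. Then the derivations D_x and D_h commute: for every twice continuously differentiable g : ℝ² → ℝ and every p ∈ Ω, (D_h(D_x g))(p) = (D_x(D_h g))(p). -/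
noncomputable section

/-! The commutator is `[D_h, D_x] g = U⁻² · (∂₁U + ∂₂(F·U)) · ∂₂g`: a pointwise computation with
the product and quotient rules, in which the mixed second derivatives of `g` cancel by Schwarz's
theorem. The integrating factor condition is exactly the vanishing of the middle factor. -/

section PartialDerivatives

variable {f g : ℝ × ℝ → ℝ} {p : ℝ × ℝ}

lemma hasDerivAt_pd1 (hf : DifferentiableAt ℝ f p) :
    HasDerivAt (fun t => f (t, p.2)) (pd1 f p) p.1 :=
  (hf.comp p.1 (differentiableAt_id.prodMk (differentiableAt_const _))).hasDerivAt

lemma hasDerivAt_pd2 (hf : DifferentiableAt ℝ f p) :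
    HasDerivAt (fun t => f (p.1, t)) (pd2 f p) p.2 :=
  (hf.comp p.2 ((differentiableAt_const _).prodMk differentiableAt_id)).hasDerivAt

lemma pd1_eq_fderiv (hf : DifferentiableAt ℝ f p) : pd1 f p = fderiv ℝ f p (1, 0) :=
  (hf.hasFDerivAt.comp_hasDerivAt p.1
    ((hasDerivAt_id p.1).prodMk (hasDerivAt_const p.1 p.2))).deriv

lemma pd2_eq_fderiv (hf : DifferentiableAt ℝ f p) : pd2 f p = fderiv ℝ f p (0, 1) :=
  (hf.hasFDerivAt.comp_hasDerivAt p.2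
    ((hasDerivAt_const p.2 p.1).prodMk (hasDerivAt_id p.2))).deriv

lemma pd2_add (hf : DifferentiableAt ℝ f p) (hg : DifferentiableAt ℝ g p) :
    pd2 (fun q => f q + g q) p = pd2 f p + pd2 g p :=
  ((hasDerivAt_pd2 hf).add (hasDerivAt_pd2 hg)).deriv

lemma pd1_mul (hf : DifferentiableAt ℝ f p) (hg : DifferentiableAt ℝ g p) :
    pd1 (fun q => f q * g q) p = pd1 f p * g p + f p * pd1 g p :=
  ((hasDerivAt_pd1 hf).mul (hasDerivAt_pd1 hg)).deriv

lemma pd2_mul (hf : DifferentiableAt ℝ f p) (hg : DifferentiableAt ℝ g p) :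
    pd2 (fun q => f q * g q) p = pd2 f p * g p + f p * pd2 g p :=
  ((hasDerivAt_pd2 hf).mul (hasDerivAt_pd2 hg)).deriv

lemma pd1_inv (hf : DifferentiableAt ℝ f p) (hf0 : f p ≠ 0) :
    pd1 (fun q => (f q)⁻¹) p = -pd1 f p / f p ^ 2 :=
  ((hasDerivAt_pd1 hf).inv hf0).deriv

lemma pd2_inv (hf : DifferentiableAt ℝ f p) (hf0 : f p ≠ 0) :
    pd2 (fun q => (f q)⁻¹) p = -pd2 f p / f p ^ 2 :=
  ((hasDerivAt_pd2 hf).inv hf0).deriv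

lemma pd1_eq_fderiv_apply (hg : Differentiable ℝ g) : pd1 g = fun q => fderiv ℝ g q (1, 0) :=
  funext fun q => pd1_eq_fderiv (hg q)

lemma pd2_eq_fderiv_apply (hg : Differentiable ℝ g) : pd2 g = fun q => fderiv ℝ g q (0, 1) :=
  funext fun q => pd2_eq_fderiv (hg q)

lemma differentiable_pd1 (hg : ContDiff ℝ 2 g) : Differentiable ℝ (pd1 g) := by
  rw [pd1_eq_fderiv_apply (hg.differentiable two_ne_zero)]
  exact ((hg.fderiv_right le_rfl).clm_apply contDiff_const).differentiable one_ne_zero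

lemma differentiable_pd2 (hg : ContDiff ℝ 2 g) : Differentiable ℝ (pd2 g) := by
  rw [pd2_eq_fderiv_apply (hg.differentiable two_ne_zero)]
  exact ((hg.fderiv_right le_rfl).clm_apply contDiff_const).differentiable one_ne_zero

lemma pd1_pd2_comm (hg : ContDiff ℝ 2 g) (p : ℝ × ℝ) : pd1 (pd2 g) p = pd2 (pd1 g) p := by
  have hdg : DifferentiableAt ℝ (fderiv ℝ g) p :=
    (hg.fderiv_right le_rfl).differentiable one_ne_zero p
  rw [pd1_eq_fderiv_apply (hg.differentiable two_ne_zero),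
    pd2_eq_fderiv_apply (hg.differentiable two_ne_zero),
    pd1_eq_fderiv (hdg.clm_apply (differentiableAt_const _)),
    pd2_eq_fderiv (hdg.clm_apply (differentiableAt_const _)),
    fderiv_clm_apply hdg (differentiableAt_const _),
    fderiv_clm_apply hdg (differentiableAt_const _)]
  simpa using hg.contDiffAt.isSymmSndFDerivAt (by simp) (1, 0) (0, 1)

end PartialDerivatives

lemma Dh_Dx_sub_Dx_Dh {F U g : ℝ × ℝ → ℝ} {p : ℝ × ℝ} (hF : DifferentiableAt ℝ F p)
    (hU : DifferentiableAt ℝ U p) (hU0 : U p ≠ 0) (hg : ContDiff ℝ 2 g) :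
    Dh U (Dx F g) p - Dx F (Dh U g) p
      = (pd1 U p + pd2 (fun q => F q * U q) p) / U p ^ 2 * pd2 g p := by
  have hg1 := differentiable_pd1 hg p
  have hg2 := differentiable_pd2 hg p
  unfold Dh Dx
  rw [pd2_add hg1 (hF.fun_mul hg2), pd2_mul hF hg2, pd1_mul (hU.fun_inv hU0) hg2,
    pd2_mul (hU.fun_inv hU0) hg2, pd1_inv hU hU0, pd2_inv hU hU0, pd2_mul hF hU, pd1_pd2_comm hg]
  field_simp
  ring

/-- if `U` is an integrating factor for `F`, i.e. `∂₁U + ∂₂(F·U) = 0` on `Ω`,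
then the derivations `D_x` and `D_h` commute on `Ω`. -/
theorem Dx_Dh_commute (Ω : Set (ℝ × ℝ)) (hΩ : IsOpen Ω)
    (F U : ℝ × ℝ → ℝ)
    (hF : ContDiffOn ℝ 1 F Ω) (hU : ContDiffOn ℝ 1 U Ω)
    (hU0 : ∀ p ∈ Ω, U p ≠ 0)
    (hint : ∀ p ∈ Ω, pd1 U p + pd2 (fun q => F q * U q) p = 0) :
    ∀ g : ℝ × ℝ → ℝ, ContDiff ℝ 2 g →
      ∀ p ∈ Ω, Dh U (Dx F g) p = Dx F (Dh U g) p := by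
  intro g hg p hp
  have hFp : DifferentiableAt ℝ F p :=
    (hF.contDiffAt (hΩ.mem_nhds hp)).differentiableAt one_ne_zero
  have hUp : DifferentiableAt ℝ U p :=
    (hU.contDiffAt (hΩ.mem_nhds hp)).differentiableAt one_ne_zero
  rw [← sub_eq_zero, Dh_Dx_sub_Dx_Dh hFp hUp (hU0 p hp) hg, hint p hp, zero_div, zero_mul]
end
end
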